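/- Let T be the linear operator with dom(T) = dom(D₀) and Tu = D₀(𝓜u) + 𝓝u, and assume there is c > 0 with Re⟨Tu, u⟩ ≥ c‖u‖² for all u ∈ dom(D₀). Let A : dom(A) ⊆ K → K be a densely defined closed linear operator that is maximal monotone, i.e., Re⟨Au, u⟩ ≥ 0 for all u ∈ dom(A) and 1 + A maps dom(A) onto K. Then for every ψ ∈ dom(D₀) ∩ dom(A*): Re⟨−𝓜*(D₀ψ) + 2ν𝓜*ψ + 𝓝*ψ + A*ψ, ψ⟩ ≥ c‖ψ‖². -/

import Mathlib

/-! Both parts of the operator are accretive on `ψ`. The part coming from `T` is its formal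
adjoint, because `D₀* = 2ν - D₀` turns `-𝓜*D₀ + 2ν𝓜*` into `𝓜*D₀*`; hence its quadratic form
at `ψ` is the conjugate of that of `T`. For `A*`, maximality gives `u ∈ dom A` with
`u + Au = ψ - A*ψ`, and then `Re⟨A*ψ, ψ⟩ = ‖ψ - u‖² + Re⟨Au, u⟩ ≥ 0`. -/

open Filter

/-- The operator `T` with domain `dom D₀`, `T u = D₀(𝓜 u) + 𝓝 u`. -/
noncomputable def T0 {K : Type*} [NormedAddCommGroup K] [InnerProductSpace ℂ K]
    (D₀ : K →ₗ.[ℂ] K) (Mc N : K →L[ℂ] K)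
    (hM : ∀ u ∈ D₀.domain, Mc u ∈ D₀.domain) : K →ₗ.[ℂ] K where
  domain := D₀.domain
  toFun :=
    D₀.toFun.comp (LinearMap.codRestrict D₀.domain
        ((Mc : K →ₗ[ℂ] K).comp D₀.domain.subtype) (fun u => hM _ u.2))
    + (N : K →ₗ[ℂ] K).comp D₀.domain.subtype

open scoped InnerProductSpace LinearPMap

namespace LinearPMap

variable {𝕜 E : Type*} [RCLike 𝕜] [NormedAddCommGroup E] [InnerProductSpace 𝕜 E]
  [CompleteSpace E]

theorem re_inner_adjoint_self_nonneg {A : E →ₗ.[𝕜] E} (hA : Dense (A.domain : Set E))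
    (hmono : ∀ u : A.domain, 0 ≤ RCLike.re ⟪A u, (u : E)⟫_𝕜)
    (hmax : ∀ y : E, ∃ u : A.domain, (u : E) + A u = y) (ψ : A†.domain) :
    0 ≤ RCLike.re ⟪A† ψ, (ψ : E)⟫_𝕜 := by
  obtain ⟨u, hu⟩ := hmax (ψ - A† ψ)
  have hψ : (ψ : E) = A† ψ + u + A u := by rw [add_assoc, hu]; abel
  have hadj : ⟪A† ψ, (u : E)⟫_𝕜 = ⟪(ψ : E), A u⟫_𝕜 := adjoint_isFormalAdjoint hA ψ u
  have hre_ψ : RCLike.re ⟪A† ψ, (ψ : E)⟫_𝕜 = RCLike.re ⟪A† ψ, A† ψ⟫_𝕜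
      + RCLike.re ⟪A† ψ, (u : E)⟫_𝕜 + RCLike.re ⟪A† ψ, A u⟫_𝕜 := by
    rw [hψ]; simp only [inner_add_right, RCLike.re.map_add]
  have hre_u : RCLike.re ⟪A† ψ, (u : E)⟫_𝕜 = RCLike.re ⟪A u, A† ψ⟫_𝕜
      + RCLike.re ⟪A u, (u : E)⟫_𝕜 + RCLike.re ⟪A u, A u⟫_𝕜 := by
    rw [hadj, inner_re_symm, hψ]; simp only [inner_add_right, RCLike.re.map_add]
  have key : RCLike.re ⟪A† ψ, (ψ : E)⟫_𝕜 = ‖A† ψ + A u‖ ^ 2 + RCLike.re ⟪A u, (u : E)⟫_𝕜 := by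
    have := norm_add_sq (𝕜 := 𝕜) (A† ψ) (A u)
    have := inner_re_symm (𝕜 := 𝕜) (A u) (A† ψ)
    rw [inner_self_eq_norm_sq] at hre_ψ hre_u
    linarith
  rw [key]
  exact add_nonneg (sq_nonneg _) (hmono u)

end LinearPMap

theorem inner_adjoint_comp_adjoint_add_adjoint_eq_inner_T0 {K : Type*} [NormedAddCommGroup K]
    [InnerProductSpace ℂ K] [CompleteSpace K] {D₀ : K →ₗ.[ℂ] K}
    (hD₀ : Dense (D₀.domain : Set K)) (Mc N : K →L[ℂ] K)
    (hM : ∀ u ∈ D₀.domain, Mc u ∈ D₀.domain) (ψ : D₀†.domain) (v : D₀.domain) :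
    ⟪ContinuousLinearMap.adjoint Mc (D₀† ψ) + ContinuousLinearMap.adjoint N ψ, (v : K)⟫_ℂ
      = ⟪(ψ : K), T0 D₀ Mc N hM v⟫_ℂ := by
  have hD : ⟪D₀† ψ, Mc v⟫_ℂ = ⟪(ψ : K), D₀ ⟨Mc v, hM v v.2⟩⟫_ℂ :=
    D₀.adjoint_isFormalAdjoint hD₀ ψ ⟨Mc v, hM v v.2⟩
  rw [inner_add_left, ContinuousLinearMap.adjoint_inner_left,
    ContinuousLinearMap.adjoint_inner_left, hD, ← inner_add_right]
  rfl

theorem stmt9_general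
    {K : Type*} [NormedAddCommGroup K] [InnerProductSpace ℂ K] [CompleteSpace K]
    (ν : ℝ)
    (D₀ : K →ₗ.[ℂ] K) (hD₀dense : Dense (D₀.domain : Set K))
    -- the adjoint of `D₀` is `2ν - D₀`
    (hadjdom : D₀.adjoint.domain = D₀.domain)
    (hadjval : ∀ (u : K) (hu : u ∈ D₀.domain) (hu' : u ∈ D₀.adjoint.domain),
      D₀.adjoint ⟨u, hu'⟩ = ((2 * ν : ℝ) : ℂ) • u - D₀ ⟨u, hu⟩)
    (Mc N : K →L[ℂ] K)
    (hMdom : ∀ u ∈ D₀.domain, Mc u ∈ D₀.domain)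
    (c : ℝ)
    (hpos : ∀ (u : K) (hu : u ∈ D₀.domain),
      c * ‖u‖ ^ 2 ≤ (inner ℂ (T0 D₀ Mc N hMdom ⟨u, hu⟩) u : ℂ).re)
    -- `A` is densely defined, closed and maximal monotone
    (A : K →ₗ.[ℂ] K) (hAdense : Dense (A.domain : Set K))
    (hAmono : ∀ u : A.domain, 0 ≤ (inner ℂ (A u) (u : K) : ℂ).re)
    (hAmax : ∀ y : K, ∃ u : A.domain, (u : K) + A u = y) :
    ∀ (ψ : K) (hψd : ψ ∈ D₀.domain) (hψa : ψ ∈ A.adjoint.domain),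
      c * ‖ψ‖ ^ 2 ≤ (inner ℂ (-(ContinuousLinearMap.adjoint Mc (D₀ ⟨ψ, hψd⟩))
          + ((2 * ν : ℝ) : ℂ) • ContinuousLinearMap.adjoint Mc ψ
          + ContinuousLinearMap.adjoint N ψ + A.adjoint ⟨ψ, hψa⟩) ψ : ℂ).re := by
  intro ψ hψd hψa
  have hψ_adj : ψ ∈ D₀†.domain := hadjdom ▸ hψd
  have hsplit : -(ContinuousLinearMap.adjoint Mc (D₀ ⟨ψ, hψd⟩))
      + ((2 * ν : ℝ) : ℂ) • ContinuousLinearMap.adjoint Mc ψ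
      = ContinuousLinearMap.adjoint Mc (D₀† ⟨ψ, hψ_adj⟩) := by
    rw [hadjval ψ hψd hψ_adj, map_sub, map_smul, neg_add_eq_sub]
  have hT : (inner ℂ (ContinuousLinearMap.adjoint Mc (D₀† ⟨ψ, hψ_adj⟩)
      + ContinuousLinearMap.adjoint N ψ) ψ : ℂ).re
      = (inner ℂ (T0 D₀ Mc N hMdom ⟨ψ, hψd⟩) ψ : ℂ).re := by
    rw [inner_adjoint_comp_adjoint_add_adjoint_eq_inner_T0 hD₀dense Mc N hMdom ⟨ψ, hψ_adj⟩ ⟨ψ, hψd⟩]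
    exact inner_re_symm (𝕜 := ℂ) _ _
  have hA : 0 ≤ (inner ℂ (A† ⟨ψ, hψa⟩) ψ : ℂ).re :=
    LinearPMap.re_inner_adjoint_self_nonneg hAdense hAmono hAmax ⟨ψ, hψa⟩
  rw [hsplit, inner_add_left, Complex.add_re, hT]
  linarith [hpos ψ hψd, hA]

theorem stmt9
    {K : Type*} [NormedAddCommGroup K] [InnerProductSpace ℂ K] [CompleteSpace K]
    (ν : ℝ) (hν : 0 < ν)
    (D₀ : K →ₗ.[ℂ] K) (hD₀dense : Dense (D₀.domain : Set K)) (hD₀closed : D₀.IsClosed)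
    -- the adjoint of `D₀` is `2ν - D₀`
    (hadjdom : D₀.adjoint.domain = D₀.domain)
    (hadjval : ∀ (u : K) (hu : u ∈ D₀.domain) (hu' : u ∈ D₀.adjoint.domain),
      D₀.adjoint ⟨u, hu'⟩ = ((2 * ν : ℝ) : ℂ) • u - D₀ ⟨u, hu⟩)
    (Mc N Mop : K →L[ℂ] K)
    (hMdom : ∀ u ∈ D₀.domain, Mc u ∈ D₀.domain)
    (hMcomm : ∀ u : D₀.domain, Mc (D₀ u) = D₀ ⟨Mc u, hMdom u u.2⟩ + Mop u)
    (c : ℝ) (hc : 0 < c)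
    (hpos : ∀ (u : K) (hu : u ∈ D₀.domain),
      c * ‖u‖ ^ 2 ≤ (inner ℂ (T0 D₀ Mc N hMdom ⟨u, hu⟩) u : ℂ).re)
    -- `A` is densely defined, closed and maximal monotone
    (A : K →ₗ.[ℂ] K) (hAdense : Dense (A.domain : Set K)) (hAclosed : A.IsClosed)
    (hAmono : ∀ u : A.domain, 0 ≤ (inner ℂ (A u) (u : K) : ℂ).re)
    (hAmax : ∀ y : K, ∃ u : A.domain, (u : K) + A u = y) :
    ∀ (ψ : K) (hψd : ψ ∈ D₀.domain) (hψa : ψ ∈ A.adjoint.domain),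
      c * ‖ψ‖ ^ 2 ≤ (inner ℂ (-(ContinuousLinearMap.adjoint Mc (D₀ ⟨ψ, hψd⟩))
          + ((2 * ν : ℝ) : ℂ) • ContinuousLinearMap.adjoint Mc ψ
          + ContinuousLinearMap.adjoint N ψ + A.adjoint ⟨ψ, hψa⟩) ψ : ℂ).re :=
  stmt9_general ν D₀ hD₀dense hadjdom hadjval Mc N hMdom c hpos A hAdense hAmono hAmax
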